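/- Suppose the martingale (W_n)_{n≥0} is uniformly integrable. Then there exist ε > 0 and η > 0 such that for all t > 1 and all n ∈ ℕ, ℙ(M_n > t) ≤ η^{−1} ℙ(W_n > t ε), where M_n := max_{0 ≤ j ≤ n} W_j. -/

import Mathlib

open MeasureTheory ProbabilityTheory Filter Topology

noncomputable section

namespace DirectedPolymer

variable {Ω : Type*} [MeasurableSpace Ω]

/-- The nearest-neighbor step in `ℤ^d` in direction `e.1`, forward if `e.2 = true`,
backward otherwise. -/
def step (d : ℕ) (e : Fin d × Bool) : Fin d → ℤ :=
  Pi.single e.1 (if e.2 then 1 else -1)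

/-- The position, after `k` steps, of the nearest-neighbor path started at the origin whose
successive steps are encoded by `σ`. -/
def walkPos {d n : ℕ} (σ : Fin n → Fin d × Bool) (k : ℕ) : Fin d → ℤ :=
  ∑ j : Fin n, if (j : ℕ) < k then step d (σ j) else 0

/-- The logarithmic moment generating function `λ(β) = log E[exp (β ω(1,0))]`. -/
def logMGF {d : ℕ} (P : Measure Ω) (env : ℕ × (Fin d → ℤ) → Ω → ℝ) (β : ℝ) : ℝ :=
  Real.log (∫ x, Real.exp (β * env (1, 0) x) ∂P)

/-- The renormalized partition function `W_n` of the directed polymer: the expectation, over the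
simple random walk `(S_i)` on `ℤ^d` started at the origin (uniform choice among the `2d`
neighbors at each step), of `exp (β ∑_{i=1}^n ω(i, S_i) - n λ(β))`. -/
def W {d : ℕ} (P : Measure Ω) (env : ℕ × (Fin d → ℤ) → Ω → ℝ) (β : ℝ) (n : ℕ) (x : Ω) : ℝ :=
  (2 * d : ℝ)⁻¹ ^ n * ∑ σ : Fin n → Fin d × Bool,
    Real.exp (β * ∑ i : Fin n, env ((i : ℕ) + 1, walkPos σ ((i : ℕ) + 1)) x
      - n * logMGF P env β)

/-- The environment `ω = env` is a family of i.i.d. random variables, indexed by space-time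
`ℕ × ℤ^d`, having all exponential moments: `E[exp (b |ω(1,0)|)] < ∞` for all `b ≥ 0`. -/
structure IsIIDEnv {d : ℕ} (P : Measure Ω) (env : ℕ × (Fin d → ℤ) → Ω → ℝ) : Prop where
  meas : ∀ p, Measurable (env p)
  indep : iIndepFun env P
  ident : ∀ p, IdentDistrib (env p) (env (1, 0)) P P
  expMom : ∀ b : ℝ, 0 ≤ b → Integrable (fun x => Real.exp (b * |env (1, 0) x|)) P

/-- The filtration `F_n = σ(ω(i,x) : i ≤ n, x ∈ ℤ^d)` generated by the environment. -/
def envFiltration {d : ℕ} (env : ℕ × (Fin d → ℤ) → Ω → ℝ)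
    (hmeas : ∀ p, Measurable (env p)) :
    Filtration ℕ (inferInstance : MeasurableSpace Ω) where
  seq n := ⨆ p ∈ {p : ℕ × (Fin d → ℤ) | p.1 ≤ n}, MeasurableSpace.comap (env p) inferInstance
  mono' := by
    intro i j hij
    exact iSup₂_le fun p hp => le_iSup₂_of_le p (le_trans hp hij) le_rfl
  le' n := iSup₂_le fun p _ => (hmeas p).comap_le

/-- The polymer measure of the event `{S_n = y}`, multiplied by `W_n`:
`W_n · μ_{n,β}(S_n = y)`. -/
def polymerMass {d : ℕ} (P : Measure Ω) (env : ℕ × (Fin d → ℤ) → Ω → ℝ) (β : ℝ) (n : ℕ)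
    (y : Fin d → ℤ) (x : Ω) : ℝ :=
  (2 * d : ℝ)⁻¹ ^ n * ∑ σ : Fin n → Fin d × Bool,
    if walkPos σ n = y then
      Real.exp (β * ∑ i : Fin n, env ((i : ℕ) + 1, walkPos σ ((i : ℕ) + 1)) x
        - n * logMGF P env β)
    else 0

/-- The space-time shift `θ_{n,y}` of the environment: `(θ_{n,y} ω)(·,·) = ω(n + ·, y + ·)`. -/
def shiftEnv {d : ℕ} (n : ℕ) (y : Fin d → ℤ) (env : ℕ × (Fin d → ℤ) → Ω → ℝ) :
    ℕ × (Fin d → ℤ) → Ω → ℝ :=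
  fun p => env (n + p.1, y + p.2)

/-- The hitting time `inf {n ≥ 0 : t < g n x}` of `(t, ∞)`, with value `⊤ = ∞` if the
process never exceeds `t`. -/
def hitAbove (g : ℕ → Ω → ℝ) (t : ℝ) (x : Ω) : ℕ∞ :=
  sInf {m : ℕ∞ | ∃ k : ℕ, m = (k : ℕ∞) ∧ t < g k x}

/-- The hitting time `inf {n ≥ 0 : g n x ≤ s}` of `(-∞, s]`, with value `⊤ = ∞` if the
process never goes below `s`. -/
def hitBelow (g : ℕ → Ω → ℝ) (s : ℝ) (x : Ω) : ℕ∞ :=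
  sInf {m : ℕ∞ | ∃ k : ℕ, m = (k : ℕ∞) ∧ g k x ≤ s}

/-!
Uniform integrability gives a level `K` with `E[W_m; W_m ≥ K] ≤ 1/8` for all `m`. Split the event
`{M_n > t}` according to the first time `j ≤ n` at which `W_j > t`. By the Markov property of the
polymer, `W_n = ∑_σ w_j(σ) · W_{n-j} ∘ θ_{j, S_j(σ)}`, where the weights `w_j(σ)` of the first `j`
steps are `F_j`-measurable and sum to `W_j > t`, while the shifted partition functions are
independent of `F_j` and each distributed as `W_{n-j}`. A convex combination `Z` of nonnegative
mean-one variables with such uniformly small tails has `E[Z; Z > 8K] ≤ 1/4`, hence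
`P(Z > 1/2) ≥ 1/(32K)`. So on the first-passage event at time `j`, `W_n > t/2` with conditional
probability at least `1/(32K)`, and summing over `j` gives the bound with `ε = 1/2`, `c = 1/(32K)`.
-/

open scoped ENNReal

section General

variable {P : Measure Ω}

lemma setIntegral_le_mul_measureReal_add_tail [IsFiniteMeasure P] {X : Ω → ℝ}
    (hX_nonneg : ∀ x, 0 ≤ X x) (hX_meas : Measurable X) (hX_int : Integrable X P) {K : ℝ}
    (hK : 0 ≤ K) {B : Set Ω} (hB : MeasurableSet B) :
    ∫ x in B, X x ∂P ≤ K * P.real B + ∫ x in {x | K ≤ X x}, X x ∂P := by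
  have hS : MeasurableSet {x | K ≤ X x} := measurableSet_le measurable_const hX_meas
  have h_int : Integrable (fun x => K + {x | K ≤ X x}.indicator X x) P :=
    (integrable_const K).add (hX_int.indicator hS)
  calc ∫ x in B, X x ∂P ≤ ∫ x in B, (K + {x | K ≤ X x}.indicator X x) ∂P := by
        refine setIntegral_mono_on hX_int.integrableOn h_int.integrableOn hB fun x _ => ?_
        by_cases hx : x ∈ {x | K ≤ X x}
        · rw [Set.indicator_of_mem hx]; linarith [hX_nonneg x]
        · rw [Set.indicator_of_notMem hx, add_zero]; exact (not_le.1 hx).le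
    _ = K * P.real B + ∫ x in B, {x | K ≤ X x}.indicator X x ∂P := by
        rw [integral_add (integrable_const K).integrableOn (hX_int.indicator hS).integrableOn,
          setIntegral_const, smul_eq_mul, mul_comm]
    _ ≤ K * P.real B + ∫ x in {x | K ≤ X x}, X x ∂P := by
        rw [← integral_indicator hS]
        exact (add_le_add_iff_left _).2 (setIntegral_le_integral (hX_int.indicator hS)
          (Eventually.of_forall fun x => Set.indicator_nonneg (fun y _ => hX_nonneg y) x))

lemma ofReal_le_measure_half_lt [IsProbabilityMeasure P] {Z : Ω → ℝ}
    (hZ_meas : Measurable Z) (hZ_int : Integrable Z P) (hZ_mean : ∫ x, Z x ∂P = 1)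
    {M : ℝ} (hM : 0 < M) (htail : ∫ x in {x | M < Z x}, Z x ∂P ≤ 1 / 4) :
    ENNReal.ofReal (1 / (4 * M)) ≤ P {x | 1 / 2 < Z x} := by
  set D := {x | 1 / 2 < Z x}
  set B := {x | M < Z x}
  have hD : MeasurableSet D := measurableSet_lt measurable_const hZ_meas
  have hB : MeasurableSet B := measurableSet_lt measurable_const hZ_meas
  have hpt : ∀ x, Z x ≤ 1 / 2 + M * D.indicator 1 x + B.indicator Z x := by
    intro x
    by_cases hxB : x ∈ B
    · rw [Set.indicator_of_mem hxB]
      have : 0 ≤ D.indicator (1 : Ω → ℝ) x := Set.indicator_nonneg (fun _ _ => zero_le_one) x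
      nlinarith
    have : Z x ≤ M := not_lt.1 hxB
    by_cases hxD : x ∈ D
    · rw [Set.indicator_of_mem hxD, Set.indicator_of_notMem hxB, Pi.one_apply]
      linarith
    · have : Z x ≤ 1 / 2 := not_lt.1 hxD
      rw [Set.indicator_of_notMem hxD, Set.indicator_of_notMem hxB]
      linarith
  have h_int_D : Integrable (D.indicator (1 : Ω → ℝ)) P := (integrable_const 1).indicator hD
  have h_int_B : Integrable (B.indicator Z) P := hZ_int.indicator hB
  have hbound : 1 ≤ 1 / 2 + M * P.real D + 1 / 4 :=
    calc 1 = ∫ x, Z x ∂P := hZ_mean.symm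
      _ ≤ ∫ x, (1 / 2 + M * D.indicator 1 x + B.indicator Z x) ∂P :=
        integral_mono hZ_int (((integrable_const _).add (h_int_D.const_mul M)).add h_int_B) hpt
      _ = 1 / 2 + M * P.real D + ∫ x in B, Z x ∂P := by
        rw [integral_add (f := fun x => 1 / 2 + M * D.indicator 1 x)
            ((integrable_const _).add (h_int_D.const_mul M)) h_int_B,
          integral_add (integrable_const _) (h_int_D.const_mul M), integral_const_mul,
          integral_indicator_one hD, integral_indicator hB]
        simp
      _ ≤ 1 / 2 + M * P.real D + 1 / 4 := by linarith
  refine ENNReal.ofReal_le_of_le_toReal ?_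
  rw [div_le_iff₀ (by positivity)]
  change 1 ≤ P.real D * (4 * M)
  linarith

lemma ofReal_le_measure_half_lt_sum_mul [IsProbabilityMeasure P] {ι : Type*} [Fintype ι]
    {X : ι → Ω → ℝ} (hX_nonneg : ∀ i x, 0 ≤ X i x) (hX_meas : ∀ i, Measurable (X i))
    (hX_int : ∀ i, Integrable (X i) P) (hX_mean : ∀ i, ∫ x, X i x ∂P = 1)
    {K : ℝ} (hK : 0 < K) (hX_tail : ∀ i, ∫ x in {x | K ≤ X i x}, X i x ∂P ≤ 1 / 8)
    {a : ι → ℝ} (ha : ∀ i, 0 ≤ a i) (ha_sum : ∑ i, a i = 1) :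
    ENNReal.ofReal (1 / (32 * K)) ≤ P {x | 1 / 2 < ∑ i, a i * X i x} := by
  set Z := fun x => ∑ i, a i * X i x
  have hZ_nonneg : ∀ x, 0 ≤ Z x := fun x =>
    Finset.sum_nonneg fun i _ => mul_nonneg (ha i) (hX_nonneg i x)
  have hZ_meas : Measurable Z := Finset.measurable_sum _ fun i _ => (hX_meas i).const_mul _
  have hZ_int : Integrable Z P := integrable_finsetSum _ fun i _ => (hX_int i).const_mul _
  have hZ_mean : ∫ x, Z x ∂P = 1 := by
    simp only [Z, integral_finsetSum _ fun i _ => (hX_int i).const_mul _, integral_const_mul,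
      hX_mean, mul_one, ha_sum]
  set B := {x | 8 * K < Z x}
  have hB : MeasurableSet B := measurableSet_lt measurable_const hZ_meas
  have hPB : K * P.real B ≤ 1 / 8 := by
    have hmarkov := mul_meas_ge_le_integral_of_nonneg (Eventually.of_forall hZ_nonneg) hZ_int
      (8 * K)
    have hsub : P.real B ≤ P.real {x | 8 * K ≤ Z x} :=
      measureReal_mono fun x (hx : 8 * K < Z x) => hx.le
    rw [hZ_mean] at hmarkov
    nlinarith
  have htail : ∫ x in B, Z x ∂P ≤ 1 / 4 :=
    calc ∫ x in B, Z x ∂P = ∑ i, a i * ∫ x in B, X i x ∂P := by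
          simp only [Z, integral_finsetSum _ fun i _ => ((hX_int i).const_mul _).integrableOn,
            integral_const_mul]
      _ ≤ ∑ i, a i * (K * P.real B + 1 / 8) := by
          gcongr with i
          · exact ha i
          · exact (setIntegral_le_mul_measureReal_add_tail (hX_nonneg i) (hX_meas i)
              (hX_int i) hK.le hB).trans (by linarith [hX_tail i])
      _ ≤ 1 / 4 := by rw [← Finset.sum_mul, ha_sum]; linarith
  have h := ofReal_le_measure_half_lt hZ_meas hZ_int hZ_mean (by positivity : 0 < 8 * K) htail
  rwa [← mul_assoc, show (4 : ℝ) * 8 = 32 by norm_num] at h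

lemma _root_.ProbabilityTheory.IdentDistrib.setIntegral_setOf_le_eq {X Y : Ω → ℝ}
    (h : IdentDistrib X Y P P) (hX : Measurable X) (hY : Measurable Y) (K : ℝ) :
    ∫ x in {x | K ≤ X x}, X x ∂P = ∫ x in {x | K ≤ Y x}, Y x ∂P := by
  rw [← integral_indicator (measurableSet_le measurable_const hX),
    ← integral_indicator (measurableSet_le measurable_const hY)]
  exact (h.comp (measurable_id.indicator measurableSet_Ici :
    Measurable ((Set.Ici K).indicator id))).integral_eq

lemma _root_.ProbabilityTheory.IndepFun.mul_measure_le_measure_inter [IsFiniteMeasure P]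
    {α β : Type*} [MeasurableSpace α] [MeasurableSpace β] {U : Ω → α} {V : Ω → β}
    (hUV : IndepFun U V P) (hU : Measurable U) (hV : Measurable V) {A : Set α}
    (hA : MeasurableSet A) {C : Set (α × β)} (hC : MeasurableSet C) {δ : ℝ≥0∞}
    (hδ : ∀ a ∈ A, δ ≤ P {x | (a, V x) ∈ C}) :
    δ * P (U ⁻¹' A) ≤ P (U ⁻¹' A ∩ {x | (U x, V x) ∈ C}) := by
  have hAC : MeasurableSet (A ×ˢ Set.univ ∩ C) := (hA.prod MeasurableSet.univ).inter hC
  have hlaw : P.map (fun x => (U x, V x)) = (P.map U).prod (P.map V) :=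
    (indepFun_iff_map_prod_eq_prod_map_map hU.aemeasurable hV.aemeasurable).1 hUV
  calc δ * P (U ⁻¹' A) = ∫⁻ a, A.indicator (fun _ => δ) a ∂(P.map U) := by
        rw [lintegral_indicator_const hA, Measure.map_apply hU hA, mul_comm]
    _ ≤ ∫⁻ a, P.map V (Prod.mk a ⁻¹' (A ×ˢ Set.univ ∩ C)) ∂(P.map U) := by
        refine lintegral_mono fun a => ?_
        by_cases ha : a ∈ A
        · rw [Set.indicator_of_mem ha, Measure.map_apply hV (measurable_prodMk_left hAC)]
          convert hδ a ha using 2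
          ext x
          simp [ha]
        · simp [ha]
    _ = P (U ⁻¹' A ∩ {x | (U x, V x) ∈ C}) := by
        rw [← Measure.prod_apply hAC, ← hlaw, Measure.map_apply (hU.prodMk hV) hAC]
        congr 1
        ext x
        simp

lemma measurable_indicator_apply_of_mem {ι β : Type*} [MeasurableSpace β] [Zero β]
    {f : ι → Ω → β} {S : Set ι} (hf : ∀ i ∈ S, Measurable (f i)) :
    Measurable fun x => S.indicator (fun i => f i x) := by
  refine measurable_pi_iff.2 fun i => ?_
  by_cases hi : i ∈ S
  · simpa only [Set.indicator_of_mem hi] using hf i hi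
  · simpa only [Set.indicator_of_notMem hi] using measurable_const

lemma _root_.ProbabilityTheory.iIndepFun.indepFun_indicator {ι β : Type*} [MeasurableSpace β]
    [Zero β] {f : ι → Ω → β} (hf : iIndepFun f P) (hf_meas : ∀ i, Measurable (f i))
    {S T : Set ι} (hST : Disjoint S T) :
    IndepFun (fun x => S.indicator (fun i => f i x)) (fun x => T.indicator (fun i => f i x)) P := by
  have hle : ∀ R : Set ι, MeasurableSpace.comap (fun x => R.indicator (fun i => f i x))
      inferInstance ≤ ⨆ i ∈ R, MeasurableSpace.comap (f i) inferInstance := fun R =>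
    measurable_iff_comap_le.1 <| @measurable_indicator_apply_of_mem Ω
      (⨆ i ∈ R, MeasurableSpace.comap (f i) inferInstance) ι β _ _ f R fun i hi =>
        (comap_measurable (f i)).mono
          (le_iSup₂ (f := fun i _ => MeasurableSpace.comap (f i) inferInstance) i hi) le_rfl
  rw [IndepFun_iff_Indep]
  exact indep_of_indep_of_le_right (indep_of_indep_of_le_left
    (indep_iSup_of_disjoint (fun i => (hf_meas i).comap_le) hf.iIndep hST) (hle S)) (hle T)

end General

section FirstPassage

def firstPassage {α : Type*} (X : ℕ → α → ℝ) (t : ℝ) (j : ℕ) : Set α :=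
  {x | (∀ k < j, X k x ≤ t) ∧ t < X j x}

variable {α : Type*} {X : ℕ → α → ℝ} {t : ℝ}

lemma measurableSet_firstPassage [MeasurableSpace α] (hX : ∀ k, Measurable (X k)) (j : ℕ) :
    MeasurableSet (firstPassage X t j) := by
  have h : firstPassage X t j = (⋂ k ∈ Set.Iio j, {x | X k x ≤ t}) ∩ {x | t < X j x} := by
    ext x
    simp [firstPassage]
  rw [h]
  exact (MeasurableSet.biInter (Set.to_countable _) fun k _ =>
    measurableSet_le (hX k) measurable_const).inter (measurableSet_lt measurable_const (hX j))

lemma firstPassage_pairwiseDisjoint (s : Set ℕ) : s.PairwiseDisjoint (firstPassage X t) := by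
  intro i _ j _ hij
  refine Set.disjoint_left.2 fun x hi hj => ?_
  rcases lt_or_gt_of_ne hij with h | h
  · exact (hj.1 i h).not_gt hi.2
  · exact (hi.1 j h).not_gt hj.2

lemma setOf_lt_iSup_subset_biUnion_firstPassage (n : ℕ) :
    {x | t < ⨆ j : Fin (n + 1), X j x} ⊆ ⋃ j ∈ Finset.range (n + 1), firstPassage X t j := by
  intro x (hx : t < ⨆ j : Fin (n + 1), X j x)
  obtain ⟨j, hj⟩ := (lt_ciSup_iff (Set.finite_range _).bddAbove).1 hx
  have hex : ∃ k, t < X k x := ⟨j, hj⟩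
  refine Set.mem_biUnion (x := Nat.find hex) ?_
    ⟨fun k hk => not_lt.1 (Nat.find_min hex hk), Nat.find_spec hex⟩
  exact Finset.mem_range.2 (Nat.lt_succ_of_le ((Nat.find_min' hex hj).trans j.is_le))

lemma mul_measure_lt_iSup_le [MeasurableSpace α] {P : Measure α} (hX : ∀ k, Measurable (X k))
    {B : Set α} (hB : MeasurableSet B) {δ : ℝ≥0∞} (n : ℕ)
    (h : ∀ j ≤ n, δ * P (firstPassage X t j) ≤ P (firstPassage X t j ∩ B)) :
    δ * P {x | t < ⨆ j : Fin (n + 1), X j x} ≤ P B :=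
  calc δ * P {x | t < ⨆ j : Fin (n + 1), X j x}
      ≤ δ * ∑ j ∈ Finset.range (n + 1), P (firstPassage X t j) := by
        gcongr
        exact (measure_mono (setOf_lt_iSup_subset_biUnion_firstPassage n)).trans
          (measure_biUnion_finset_le _ _)
    _ ≤ ∑ j ∈ Finset.range (n + 1), P (firstPassage X t j ∩ B) := by
        rw [Finset.mul_sum]
        exact Finset.sum_le_sum fun j hj => h j (Nat.lt_succ_iff.1 (Finset.mem_range.1 hj))
    _ = P (⋃ j ∈ Finset.range (n + 1), firstPassage X t j ∩ B) :=
        (measure_biUnion_finset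
          (fun i hi j hj hij => ((firstPassage_pairwiseDisjoint _ hi hj hij).mono
            Set.inter_subset_left Set.inter_subset_left))
          fun j _ => (measurableSet_firstPassage hX j).inter hB).symm
    _ ≤ P B := measure_mono (Set.iUnion₂_subset fun _ _ => Set.inter_subset_right)

end FirstPassage

section Paths

variable {d : ℕ}

def pathWeight {n : ℕ} (lam β : ℝ) (σ : Fin n → Fin d × Bool) (G : ℕ × (Fin d → ℤ) → ℝ) :
    ℝ :=
  Real.exp (β * ∑ i : Fin n, G ((i : ℕ) + 1, walkPos σ ((i : ℕ) + 1)) - n * lam)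

def partitionFn (d : ℕ) (lam β : ℝ) (n : ℕ) (G : ℕ × (Fin d → ℤ) → ℝ) : ℝ :=
  (2 * d : ℝ)⁻¹ ^ n * ∑ σ : Fin n → Fin d × Bool, pathWeight lam β σ G

def shiftCfg (j : ℕ) (y : Fin d → ℤ) (G : ℕ × (Fin d → ℤ) → ℝ) : ℕ × (Fin d → ℤ) → ℝ :=
  fun p => G (j + p.1, y + p.2)

variable {j m : ℕ} {lam β : ℝ}

lemma walkPos_append_of_le (σ : Fin j → Fin d × Bool) (τ : Fin m → Fin d × Bool) {k : ℕ}
    (hk : k ≤ j) : walkPos (Fin.append σ τ) k = walkPos σ k := by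
  have hlate : ∀ i : Fin m, ¬ j + (i : ℕ) < k := fun i => by omega
  simp [walkPos, Fin.sum_univ_add, hlate]

lemma walkPos_append_add (σ : Fin j → Fin d × Bool) (τ : Fin m → Fin d × Bool) (l : ℕ) :
    walkPos (Fin.append σ τ) (j + l) = walkPos σ j + walkPos τ l := by
  rw [walkPos, Fin.sum_univ_add]
  congr 1
  · refine Finset.sum_congr rfl fun i _ => ?_
    simp [show (i : ℕ) < j + l by omega]
  · simp [walkPos]

lemma pathWeight_append (σ : Fin j → Fin d × Bool) (τ : Fin m → Fin d × Bool)
    (G : ℕ × (Fin d → ℤ) → ℝ) :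
    pathWeight lam β (Fin.append σ τ) G =
      pathWeight lam β σ G * pathWeight lam β τ (shiftCfg j (walkPos σ j) G) := by
  have hsum : ∑ i : Fin (j + m), G ((i : ℕ) + 1, walkPos (Fin.append σ τ) ((i : ℕ) + 1)) =
      ∑ i : Fin j, G ((i : ℕ) + 1, walkPos σ ((i : ℕ) + 1)) +
        ∑ i : Fin m, shiftCfg j (walkPos σ j) G ((i : ℕ) + 1, walkPos τ ((i : ℕ) + 1)) := by
    rw [Fin.sum_univ_add]
    congr 1
    · refine Finset.sum_congr rfl fun i _ => ?_
      rw [Fin.val_castAdd, walkPos_append_of_le σ τ i.isLt]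
    · refine Finset.sum_congr rfl fun i _ => ?_
      rw [Fin.val_natAdd, add_assoc, walkPos_append_add]
      rfl
  rw [pathWeight, pathWeight, pathWeight, hsum, ← Real.exp_add]
  push_cast
  ring_nf

lemma partitionFn_add (G : ℕ × (Fin d → ℤ) → ℝ) :
    partitionFn d lam β (j + m) G = ∑ σ : Fin j → Fin d × Bool,
      (2 * d : ℝ)⁻¹ ^ j * pathWeight lam β σ G *
        partitionFn d lam β m (shiftCfg j (walkPos σ j) G) := by
  rw [partitionFn, ← (Fin.appendEquiv j m).sum_comp, Fintype.sum_prod_type, Finset.mul_sum]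
  refine Finset.sum_congr rfl fun σ _ => ?_
  simp only [partitionFn, Finset.mul_sum]
  refine Finset.sum_congr rfl fun (τ : Fin m → Fin d × Bool) _ => ?_
  rw [show Fin.appendEquiv j m (σ, τ) = Fin.append σ τ from rfl, pathWeight_append, pow_add]
  ring

lemma pathWeight_congr {n : ℕ} (σ : Fin n → Fin d × Bool) {G G' : ℕ × (Fin d → ℤ) → ℝ}
    (h : ∀ p : ℕ × (Fin d → ℤ), 1 ≤ p.1 → p.1 ≤ n → G p = G' p) :
    pathWeight lam β σ G = pathWeight lam β σ G' := by
  simp only [pathWeight]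
  congr 3
  exact Finset.sum_congr rfl fun i _ => h _ (Nat.le_add_left 1 i) i.isLt

lemma partitionFn_congr {n : ℕ} {G G' : ℕ × (Fin d → ℤ) → ℝ}
    (h : ∀ p : ℕ × (Fin d → ℤ), 1 ≤ p.1 → p.1 ≤ n → G p = G' p) :
    partitionFn d lam β n G = partitionFn d lam β n G' := by
  simp only [partitionFn, pathWeight_congr _ h]

lemma partitionFn_indicator_of_le {k : ℕ} (hk : k ≤ j) (G : ℕ × (Fin d → ℤ) → ℝ) :
    partitionFn d lam β k ({p | p.1 ≤ j}.indicator G) = partitionFn d lam β k G :=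
  partitionFn_congr fun p _ hp =>
    Set.indicator_of_mem (show p ∈ {p : ℕ × (Fin d → ℤ) | p.1 ≤ j} from hp.trans hk) G

lemma indicator_mem_firstPassage_partitionFn_iff (t : ℝ) (G : ℕ × (Fin d → ℤ) → ℝ) :
    {p | p.1 ≤ j}.indicator G ∈ firstPassage (partitionFn d lam β) t j ↔
      G ∈ firstPassage (partitionFn d lam β) t j := by
  simp only [firstPassage, Set.mem_ofPred_eq, partitionFn_indicator_of_le le_rfl]
  exact and_congr_left' (forall₂_congr fun k hk => by rw [partitionFn_indicator_of_le hk.le])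

lemma partitionFn_shiftCfg_indicator (y : Fin d → ℤ) (G : ℕ × (Fin d → ℤ) → ℝ) :
    partitionFn d lam β m (shiftCfg j y ({p | j < p.1}.indicator G)) =
      partitionFn d lam β m (shiftCfg j y G) :=
  partitionFn_congr fun p hp _ =>
    Set.indicator_of_mem (by simp; omega : (j + p.1, y + p.2) ∈ _) G

def partitionFnSplit (d : ℕ) (lam β : ℝ) (j m : ℕ) (G H : ℕ × (Fin d → ℤ) → ℝ) : ℝ :=
  ∑ σ : Fin j → Fin d × Bool,
    (2 * d : ℝ)⁻¹ ^ j * pathWeight lam β σ G * partitionFn d lam β m (shiftCfg j (walkPos σ j) H)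

lemma partitionFn_add_eq_partitionFnSplit (G : ℕ × (Fin d → ℤ) → ℝ) :
    partitionFn d lam β (j + m) G =
      partitionFnSplit d lam β j m ({p | p.1 ≤ j}.indicator G) ({p | j < p.1}.indicator G) := by
  rw [partitionFn_add]
  refine Finset.sum_congr rfl fun σ _ => ?_
  rw [partitionFn_shiftCfg_indicator,
    pathWeight_congr σ fun p _ hp =>
      (Set.indicator_of_mem (show p ∈ {p : ℕ × (Fin d → ℤ) | p.1 ≤ j} from hp) G).symm]

lemma partitionFn_nonneg (n : ℕ) (G : ℕ × (Fin d → ℤ) → ℝ) : 0 ≤ partitionFn d lam β n G :=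
  mul_nonneg (by positivity) (Finset.sum_nonneg fun _ _ => (Real.exp_pos _).le)

lemma measurable_pathWeight {n : ℕ} (σ : Fin n → Fin d × Bool) :
    Measurable (pathWeight (d := d) lam β σ) := by
  unfold pathWeight
  fun_prop

lemma measurable_partitionFn (n : ℕ) : Measurable (partitionFn d lam β n) :=
  (Finset.measurable_sum _ fun σ _ => measurable_pathWeight σ).const_mul _

lemma measurable_shiftCfg (j : ℕ) (y : Fin d → ℤ) : Measurable (shiftCfg (d := d) j y) :=
  measurable_pi_lambda _ fun _ => measurable_pi_apply _

lemma measurable_partitionFnSplit :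
    Measurable fun q : (ℕ × (Fin d → ℤ) → ℝ) × (ℕ × (Fin d → ℤ) → ℝ) =>
      partitionFnSplit d lam β j m q.1 q.2 :=
  Finset.measurable_sum _ fun σ _ =>
    (((measurable_pathWeight σ).comp measurable_fst).const_mul _).mul
      ((measurable_partitionFn m).comp ((measurable_shiftCfg j _).comp measurable_snd))

end Paths

section Polymer

variable {d : ℕ} {P : Measure Ω} {env : ℕ × (Fin d → ℤ) → Ω → ℝ} {β : ℝ}

lemma W_eq_partitionFn (n : ℕ) (x : Ω) :
    W P env β n x = partitionFn d (logMGF P env β) β n (fun p => env p x) := by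
  unfold W partitionFn pathWeight
  rfl

lemma W_nonneg (n : ℕ) (x : Ω) : 0 ≤ W P env β n x :=
  (W_eq_partitionFn n x).symm ▸ partitionFn_nonneg n _

lemma measurable_W (hmeas : ∀ p, Measurable (env p)) (n : ℕ) : Measurable (W P env β n) :=
  funext (W_eq_partitionFn (P := P) (env := env) (β := β) n) ▸
    (measurable_partitionFn n).comp (measurable_pi_lambda _ hmeas)

-- For `d = 0`, `(2 * d : ℝ)⁻¹ = 0⁻¹ = 0`, so `W_n = 0` for `n ≥ 1`.
lemma W_le_one_of_dim_zero (env : ℕ × (Fin 0 → ℤ) → Ω → ℝ) (n : ℕ) (x : Ω) :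
    W P env β n x ≤ 1 := by
  cases n <;> simp [W]

namespace IsIIDEnv

lemma integrable_exp_mul (henv : IsIIDEnv P env) (b : ℝ) (q : ℕ × (Fin d → ℤ)) :
    Integrable (fun x => Real.exp (b * env q x)) P := by
  have h₀ : Integrable (fun x => Real.exp (b * env (1, 0) x)) P := by
    have hmeas := henv.meas (1, 0)
    refine (henv.expMom |b| (abs_nonneg b)).mono' (by fun_prop)
      (Eventually.of_forall fun x => ?_)
    rw [Real.norm_eq_abs, abs_of_pos (Real.exp_pos _)]
    exact Real.exp_le_exp.2 ((le_abs_self _).trans (abs_mul b _).le)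
  exact ((henv.ident q).comp (by fun_prop : Measurable fun u => Real.exp (b * u))).integrable_iff.2
    h₀

lemma mgf_eq_exp_logMGF (henv : IsIIDEnv P env) (q : ℕ × (Fin d → ℤ)) :
    mgf (env q) P β = Real.exp (logMGF P env β) := by
  have := henv.indep.isProbabilityMeasure
  rw [logMGF, ← mgf, Real.exp_log (mgf_pos (henv.integrable_exp_mul β (1, 0)))]
  exact ((henv.ident q).comp (by fun_prop : Measurable fun u => Real.exp (β * u))).integral_eq

lemma logMGF_shiftEnv (henv : IsIIDEnv P env) (j : ℕ) (y : Fin d → ℤ) :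
    logMGF P (shiftEnv j y env) β = logMGF P env β := by
  rw [logMGF, logMGF]
  congr 1
  exact ((henv.ident _).comp (by fun_prop : Measurable fun u => Real.exp (β * u))).integral_eq

lemma integrable_pathWeight_and_integral_eq_one (henv : IsIIDEnv P env) {n : ℕ}
    (σ : Fin n → Fin d × Bool) :
    Integrable (fun x => pathWeight (logMGF P env β) β σ (fun p => env p x)) P ∧
      ∫ x, pathWeight (logMGF P env β) β σ (fun p => env p x) ∂P = 1 := by
  have := henv.indep.isProbabilityMeasure
  set q : Fin n → ℕ × (Fin d → ℤ) := fun i => ((i : ℕ) + 1, walkPos σ ((i : ℕ) + 1))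
  have hq : Function.Injective q := fun i i' h => Fin.ext (by simpa [q] using congrArg Prod.fst h)
  have hindep : iIndepFun (fun i => env (q i)) P := henv.indep.precomp hq
  have hweight : (fun x => pathWeight (logMGF P env β) β σ (fun p => env p x)) =
      fun x => Real.exp (β * (∑ i, env (q i)) x) * Real.exp (-(n * logMGF P env β)) := by
    ext x
    rw [pathWeight, sub_eq_add_neg, Real.exp_add, Finset.sum_apply]
  have hint : Integrable (fun x => Real.exp (β * (∑ i, env (q i)) x)) P :=
    hindep.integrable_exp_mul_sum (fun i => henv.meas _)
      fun i _ => henv.integrable_exp_mul β (q i)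
  refine ⟨hweight ▸ hint.mul_const _, ?_⟩
  rw [hweight, integral_mul_const]
  change mgf (∑ i, env (q i)) P β * _ = 1
  rw [hindep.mgf_sum (fun i => henv.meas _), Finset.prod_congr rfl fun i _ =>
    henv.mgf_eq_exp_logMGF (q i), Finset.prod_const, Finset.card_univ, Fintype.card_fin,
    ← Real.exp_nat_mul, ← Real.exp_add, add_neg_cancel, Real.exp_zero]

lemma integrable_W (henv : IsIIDEnv P env) (n : ℕ) : Integrable (W P env β n) P :=
  (integrable_finsetSum _ fun σ _ =>
    (henv.integrable_pathWeight_and_integral_eq_one σ).1).const_mul _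

lemma integral_W (henv : IsIIDEnv P env) (hd : 0 < d) (n : ℕ) : ∫ x, W P env β n x ∂P = 1 := by
  simp only [W_eq_partitionFn, partitionFn]
  rw [integral_const_mul, integral_finsetSum _ fun σ _ =>
    (henv.integrable_pathWeight_and_integral_eq_one σ).1]
  simp only [fun σ => (henv.integrable_pathWeight_and_integral_eq_one (β := β) σ).2,
    Finset.sum_const,
    Finset.card_univ, Fintype.card_fun, Fintype.card_prod, Fintype.card_fin, Fintype.card_bool]
  rw [nsmul_one]
  push_cast
  rw [← mul_pow, mul_comm (d : ℝ) 2, inv_mul_cancel₀ (by positivity), one_pow]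

lemma W_shiftEnv_eq (henv : IsIIDEnv P env) (j : ℕ) (y : Fin d → ℤ) (n : ℕ) (x : Ω) :
    W P (shiftEnv j y env) β n x =
      partitionFn d (logMGF P env β) β n (shiftCfg j y (fun p => env p x)) := by
  rw [W_eq_partitionFn, henv.logMGF_shiftEnv]
  rfl

lemma identDistrib_precomp (henv : IsIIDEnv P env) {f : ℕ × (Fin d → ℤ) → ℕ × (Fin d → ℤ)}
    (hf : Function.Injective f) :
    IdentDistrib (fun x p => env (f p) x) (fun x p => env p x) P P := by
  have := henv.indep.isProbabilityMeasure
  refine ⟨(measurable_pi_lambda _ fun p => henv.meas _).aemeasurable,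
    (measurable_pi_lambda _ henv.meas).aemeasurable, ?_⟩
  rw [(henv.indep.precomp hf).map_fun_eq_infinitePi_map (fun p => henv.meas _),
    henv.indep.map_fun_eq_infinitePi_map henv.meas]
  congr 1
  funext p
  exact ((henv.ident (f p)).trans (henv.ident p).symm).map_eq

lemma identDistrib_W_shiftEnv (henv : IsIIDEnv P env) (j : ℕ) (y : Fin d → ℤ) (n : ℕ) :
    IdentDistrib (W P (shiftEnv j y env) β n) (W P env β n) P P := by
  have hinj : Function.Injective fun p : ℕ × (Fin d → ℤ) => (j + p.1, y + p.2) :=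
    fun p p' h => Prod.ext (by simpa using congrArg Prod.fst h) (by simpa using congrArg Prod.snd h)
  have hW : W P (shiftEnv j y env) β n =
      partitionFn d (logMGF P env β) β n ∘ fun x p => env (j + p.1, y + p.2) x :=
    funext (henv.W_shiftEnv_eq j y n)
  rw [hW]
  exact (henv.identDistrib_precomp hinj).comp (measurable_partitionFn n)

lemma exists_setIntegral_W_le (henv : IsIIDEnv P env)
    (hUI : UniformIntegrable (W P env β) 1 P) :
    ∃ K : ℝ, 0 < K ∧ ∀ n, ∫ x in {x | K ≤ W P env β n x}, W P env β n x ∂P ≤ 1 / 8 := by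
  obtain ⟨C, hC⟩ := hUI.spec one_ne_zero ENNReal.one_ne_top (by norm_num : (0 : ℝ) < 1 / 8)
  refine ⟨max 1 C, by positivity, fun n => ?_⟩
  set S := {x | C ≤ ‖W P env β n x‖₊}
  have hS : MeasurableSet S :=
    measurableSet_le measurable_const (measurable_W henv.meas n).nnnorm
  have hsub : {x | max 1 C ≤ W P env β n x} ⊆ S := fun x (hx : max 1 (C : ℝ) ≤ _) => by
    change C ≤ ‖W P env β n x‖₊
    rw [← NNReal.coe_le_coe, coe_nnnorm, Real.norm_of_nonneg (W_nonneg n x)]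
    exact (le_max_right _ _).trans hx
  have hind_nonneg : ∀ x, 0 ≤ S.indicator (W P env β n) x :=
    Set.indicator_nonneg fun x _ => W_nonneg n x
  calc ∫ x in {x | max 1 C ≤ W P env β n x}, W P env β n x ∂P
      ≤ ∫ x in S, W P env β n x ∂P :=
        setIntegral_mono_set (henv.integrable_W n).integrableOn
          (Eventually.of_forall fun x => W_nonneg n x) (Eventually.of_forall hsub)
    _ = ∫ x, ‖S.indicator (W P env β n) x‖ ∂P := by
        rw [← integral_indicator hS]
        simp only [Real.norm_of_nonneg (hind_nonneg _)]
    _ ≤ 1 / 8 := by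
        rw [← ENNReal.ofReal_le_ofReal_iff (by norm_num),
          ofReal_integral_norm_eq_lintegral_enorm ((henv.integrable_W n).indicator hS),
          ← eLpNorm_one_eq_lintegral_enorm]
        exact hC n

lemma ofReal_le_measure_lt_sum_mul_W_shiftEnv (henv : IsIIDEnv P env) (hd : 0 < d) {K : ℝ}
    (hK : 0 < K) (htail : ∀ n, ∫ x in {x | K ≤ W P env β n x}, W P env β n x ∂P ≤ 1 / 8)
    {ι : Type*} [Fintype ι] (j : ℕ) (y : ι → Fin d → ℤ) (m : ℕ) {c : ι → ℝ}
    (hc : ∀ i, 0 ≤ c i) {s : ℝ} (hs : 0 ≤ s) (hsc : s < ∑ i, c i) :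
    ENNReal.ofReal (1 / (32 * K)) ≤
      P {x | s / 2 < ∑ i, c i * W P (shiftEnv j (y i) env) β m x} := by
  have := henv.indep.isProbabilityMeasure
  set S := ∑ i, c i
  have hS : 0 < S := hs.trans_lt hsc
  have hid := fun i => henv.identDistrib_W_shiftEnv (β := β) j (y i) m
  have hmeas : ∀ i, Measurable (W P (shiftEnv j (y i) env) β m) :=
    fun i => measurable_W (fun p => henv.meas (j + p.1, y i + p.2)) m
  refine (ofReal_le_measure_half_lt_sum_mul (fun i => W_nonneg m) hmeas
    (fun i => (hid i).integrable_iff.2 (henv.integrable_W m))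
    (fun i => (hid i).integral_eq.trans (henv.integral_W hd m)) hK
    (fun i => ((hid i).setIntegral_setOf_le_eq (hmeas i) (measurable_W henv.meas m) K).trans_le
      (htail m)) (a := fun i => c i / S) (fun i => div_nonneg (hc i) hS.le)
    (by rw [← Finset.sum_div, div_self hS.ne'])).trans (measure_mono fun x hx => ?_)
  change 1 / 2 < ∑ i, c i / S * _ at hx
  change s / 2 < _
  simp only [div_mul_eq_mul_div, ← Finset.sum_div, lt_div_iff₀ hS] at hx
  nlinarith

lemma mul_measure_firstPassage_le_measure_inter (henv : IsIIDEnv P env) (hd : 0 < d) {K : ℝ}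
    (hK : 0 < K) (htail : ∀ n, ∫ x in {x | K ≤ W P env β n x}, W P env β n x ∂P ≤ 1 / 8)
    {t : ℝ} (ht : 0 ≤ t) (j m : ℕ) :
    ENNReal.ofReal (1 / (32 * K)) * P (firstPassage (W P env β) t j) ≤
      P (firstPassage (W P env β) t j ∩ {x | t / 2 < W P env β (j + m) x}) := by
  have := henv.indep.isProbabilityMeasure
  set lam := logMGF P env β
  let past : Ω → ℕ × (Fin d → ℤ) → ℝ := fun x => {p | p.1 ≤ j}.indicator fun p => env p x
  let future : Ω → ℕ × (Fin d → ℤ) → ℝ := fun x => {p | j < p.1}.indicator fun p => env p x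
  have hindep : IndepFun past future P := henv.indep.indepFun_indicator henv.meas
    (Set.disjoint_left.2 fun p (h₁ : p.1 ≤ j) (h₂ : j < p.1) => h₁.not_gt h₂)
  set A := firstPassage (partitionFn d lam β) t j
  set C : Set ((ℕ × (Fin d → ℤ) → ℝ) × (ℕ × (Fin d → ℤ) → ℝ)) :=
    {q | t / 2 < partitionFnSplit d lam β j m q.1 q.2}
  have hC : MeasurableSet C := measurableSet_lt measurable_const measurable_partitionFnSplit
  have hpast : past ⁻¹' A = firstPassage (W P env β) t j := by
    ext x
    simp only [Set.mem_preimage, past, A, indicator_mem_firstPassage_partitionFn_iff]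
    simp only [firstPassage, Set.mem_ofPred_eq, W_eq_partitionFn, lam]
  have hsection : ∀ G ∈ A, ENNReal.ofReal (1 / (32 * K)) ≤ P {x | (G, future x) ∈ C} := by
    intro G hG
    have hfuture : ∀ (y : Fin d → ℤ) x, partitionFn d lam β m (shiftCfg j y (future x)) =
        W P (shiftEnv j y env) β m x := fun y x => by
      rw [henv.W_shiftEnv_eq, partitionFn_shiftCfg_indicator]
    simp only [C, Set.mem_ofPred_eq, partitionFnSplit, hfuture]
    refine henv.ofReal_le_measure_lt_sum_mul_W_shiftEnv hd hK htail j _ m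
      (fun σ => mul_nonneg (by positivity) (Real.exp_pos _).le) ht ?_
    rw [← Finset.mul_sum]
    exact hG.2
  have hfuture : {x | (past x, future x) ∈ C} = {x | t / 2 < W P env β (j + m) x} := by
    ext x
    change _ ↔ t / 2 < W P env β (j + m) x
    rw [W_eq_partitionFn, partitionFn_add_eq_partitionFnSplit]
    rfl
  have hmeas := fun S => measurable_indicator_apply_of_mem (S := S) fun p _ => henv.meas p
  have h := hindep.mul_measure_le_measure_inter (hmeas _) (hmeas _)
    (measurableSet_firstPassage measurable_partitionFn j) hC hsection
  rwa [hpast, hfuture] at h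

end IsIIDEnv

end Polymer

variable (P : Measure Ω) [IsProbabilityMeasure P]

theorem running_max_tail_bound
    {d : ℕ} (env : ℕ × (Fin d → ℤ) → Ω → ℝ) (henv : IsIIDEnv P env)
    {β : ℝ}
    (hUI : UniformIntegrable (W P env β) 1 P) :
    ∃ ε : ℝ, 0 < ε ∧ ∃ c : ℝ, 0 < c ∧ ∀ t : ℝ, 1 < t → ∀ n : ℕ,
      P {x | t < ⨆ j : Fin (n + 1), W P env β (j : ℕ) x} ≤
        ENNReal.ofReal c⁻¹ * P {x | t * ε < W P env β n x} := by
  rcases Nat.eq_zero_or_pos d with rfl | hd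
  · refine ⟨1, one_pos, 1, one_pos, fun t ht n => ?_⟩
    have hempty : {x | t < ⨆ j : Fin (n + 1), W P env β (j : ℕ) x} = ∅ :=
      Set.eq_empty_of_forall_notMem fun x (hx : t < _) =>
        (ciSup_le fun j : Fin (n + 1) => W_le_one_of_dim_zero env j x).not_gt (ht.trans hx)
    simp [hempty]
  obtain ⟨K, hK, htail⟩ := henv.exists_setIntegral_W_le hUI
  refine ⟨1 / 2, one_half_pos, 1 / (32 * K), by positivity, fun t ht n => ?_⟩
  rw [ENNReal.ofReal_inv_of_pos (by positivity),
    ← ENNReal.mul_le_iff_le_inv (by simp [hK]) ENNReal.ofReal_ne_top, mul_one_div]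
  refine mul_measure_lt_iSup_le (fun k => measurable_W henv.meas k)
    (measurableSet_lt measurable_const (measurable_W henv.meas n)) n fun j hj => ?_
  obtain ⟨m, rfl⟩ := Nat.exists_eq_add_of_le hj
  exact henv.mul_measure_firstPassage_le_measure_inter hd hK htail (by linarith) j m

end DirectedPolymer
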